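/- arXiv:math/0508642 — 3 statements merged into one kernel-verified Lean document; each statement's English description precedes it below -/
import Mathlib

section
/- Let f : X → X be a self-map of a set X such that for every n ≥ 1 the set Fix(fⁿ) = {x ∈ X | fⁿ(x) = x} is finite, and let t ∈ [0,1) be a real number such that the series Σ_{n≥1} tⁿ·#Fix(fⁿ)/n converges. Then the infinite product ∏_{o} (1 − t^{|o|})⁻¹, taken over all finite f-orbits o of periodic points of f (with |o| the cardinality of o), converges (is multipliable) and exp(Σ_{n≥1} tⁿ·#Fix(fⁿ)/n) = ∏_{o} (1 − t^{|o|})⁻¹. -/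
open Function Set

namespace DynZetaAux

variable {X : Type*} {f : X → X}

lemma orbit_eq_image {x : X} (hx : x ∈ periodicPts f) :
    Set.range (fun k : ℕ => f^[k] x)
      = (fun k : ℕ => f^[k] x) '' Set.Iio (minimalPeriod f x) := by
  have hpos := minimalPeriod_pos_of_mem_periodicPts hx
  apply subset_antisymm
  · rintro _ ⟨n, rfl⟩
    exact ⟨n % minimalPeriod f x, Nat.mod_lt _ hpos, iterate_mod_minimalPeriod_eq⟩
  · exact image_subset_range _ _

lemma orbit_finite {x : X} (hx : x ∈ periodicPts f) :
    (Set.range (fun k : ℕ => f^[k] x)).Finite := by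
  rw [orbit_eq_image hx]
  exact (Set.finite_Iio _).image _

lemma card_orbit {x : X} (hx : x ∈ periodicPts f) :
    Nat.card (Set.range fun k : ℕ => f^[k] x) = minimalPeriod f x := by
  rw [Nat.card_coe_set_eq, orbit_eq_image hx,
    Set.ncard_image_of_injOn iterate_injOn_Iio_minimalPeriod,
    ← Finset.coe_Iio, Set.ncard_coe_finset, Nat.card_Iio]

lemma shift_mem_periodicPts {x : X} (hx : x ∈ periodicPts f) (k : ℕ) :
    f^[k] x ∈ periodicPts f := by
  obtain ⟨n, hn, hfix⟩ := hx
  refine ⟨n, hn, ?_⟩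
  show f^[n] (f^[k] x) = f^[k] x
  rw [← Function.iterate_add_apply, Nat.add_comm, Function.iterate_add_apply, hfix]

lemma orbit_shift {x : X} (hx : x ∈ periodicPts f) (k : ℕ) :
    Set.range (fun j : ℕ => f^[j] (f^[k] x)) = Set.range (fun j : ℕ => f^[j] x) := by
  have hd := isPeriodicPt_minimalPeriod f x
  have hpos := minimalPeriod_pos_of_mem_periodicPts hx
  set d := minimalPeriod f x with hdd
  apply subset_antisymm
  · rintro _ ⟨j, rfl⟩
    exact ⟨j + k, by simp only []; rw [Function.iterate_add_apply]⟩
  · rintro _ ⟨j, rfl⟩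
    refine ⟨j + (d * k - k), ?_⟩
    have hk : d * k - k + k = d * k := by
      have : k ≤ d * k := Nat.le_mul_of_pos_left k hpos
      omega
    show f^[j + (d * k - k)] (f^[k] x) = f^[j] x
    rw [← Function.iterate_add_apply, Nat.add_assoc, hk, Function.iterate_add_apply]
    congr 1
    exact (hd.mul_const k)

/-- The type of orbits, matching the statement. -/
abbrev Orb (f : X → X) := {o : Set X // ∃ x : X, (∃ m : ℕ, 1 ≤ m ∧ f^[m] x = x) ∧
    o = Set.range (fun k : ℕ => f^[k] x)}

abbrev Per (f : X → X) := ↥(periodicPts f)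

def pi (f : X → X) (x : Per f) : Orb f :=
  ⟨Set.range (fun k : ℕ => f^[k] (x : X)),
   (x : X), ⟨minimalPeriod f (x : X), minimalPeriod_pos_of_mem_periodicPts x.2,
     isPeriodicPt_minimalPeriod f (x : X)⟩, rfl⟩

lemma orb_spec (o : Orb f) : ∃ x : X, x ∈ periodicPts f ∧
    (o : Set X) = Set.range (fun k : ℕ => f^[k] x) := by
  obtain ⟨x, ⟨m, hm, hx⟩, ho⟩ := o.2
  exact ⟨x, ⟨m, hm, hx⟩, ho⟩

lemma orb_finite (o : Orb f) : (o : Set X).Finite := by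
  obtain ⟨x, hx, ho⟩ := orb_spec o
  rw [ho]; exact orbit_finite hx

instance (o : Orb f) : Finite (o : Set X) := (orb_finite o).to_subtype

instance (o : Orb f) : Nonempty (o : Set X) := by
  obtain ⟨x, hx, ho⟩ := orb_spec o
  exact ⟨⟨x, by rw [ho]; exact ⟨0, rfl⟩⟩⟩

lemma orb_card_pos (o : Orb f) : 0 < Nat.card (o : Set X) := Nat.card_pos

lemma card_pi (x : Per f) : Nat.card ((pi f x : Set X)) = minimalPeriod f (x : X) :=
  card_orbit x.2

def toOrbit (o : Orb f) (x : {x : Per f // pi f x = o}) : (o : Set X) :=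
  ⟨(x : Per f), by
    have hx : (pi f (x : Per f) : Set X) = o := congrArg Subtype.val x.2
    rw [← hx]; exact ⟨0, rfl⟩⟩

lemma toOrbit_bijective (o : Orb f) : Function.Bijective (toOrbit o) := by
  constructor
  · intro a b h
    have : (toOrbit o a : X) = (toOrbit o b : X) := congrArg Subtype.val h
    exact Subtype.ext (Subtype.ext this)
  · rintro ⟨y, hy⟩
    obtain ⟨x₀, hx₀, ho⟩ := orb_spec o
    rw [ho] at hy
    obtain ⟨k, hk⟩ := hy
    have hyp : y ∈ periodicPts f := hk ▸ shift_mem_periodicPts hx₀ k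
    have hrange : Set.range (fun j : ℕ => f^[j] y) = (o : Set X) := by
      rw [ho, ← hk]; exact orbit_shift hx₀ k
    exact ⟨⟨⟨y, hyp⟩, Subtype.ext hrange⟩, rfl⟩

instance (o : Orb f) : Finite {x : Per f // pi f x = o} :=
  Finite.of_injective _ (toOrbit_bijective o).injective

lemma card_fiber (o : Orb f) :
    Nat.card {x : Per f // pi f x = o} = Nat.card (o : Set X) :=
  Nat.card_eq_of_bijective _ (toOrbit_bijective o)


lemma tsum_multiples (t : ℝ) (ht0 : 0 ≤ t) (ht1 : t < 1) {d : ℕ} (hd : 0 < d) :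
    ∑' k : ℕ, ENNReal.ofReal (t ^ (d * (k + 1)) / ((d : ℝ) * ((k : ℝ) + 1)))
      = ENNReal.ofReal (Real.log (1 - t ^ d)⁻¹ / d) := by
  have habs : |t ^ d| < 1 := by
    rw [abs_of_nonneg (pow_nonneg ht0 d)]
    exact pow_lt_one₀ ht0 ht1 hd.ne'
  have hs0 := (Real.hasSum_pow_div_log_of_abs_lt_one habs).div_const d
  have hterm : (fun k : ℕ => (t ^ d) ^ (k + 1) / ((k : ℝ) + 1) / (d : ℝ))
      = fun k : ℕ => t ^ (d * (k + 1)) / ((d : ℝ) * ((k : ℝ) + 1)) := by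
    funext k
    rw [← pow_mul, div_div]
    congr 1
    ring
  have hs' : HasSum (fun k : ℕ => t ^ (d * (k + 1)) / ((d : ℝ) * ((k : ℝ) + 1)))
      (Real.log (1 - t ^ d)⁻¹ / d) := by
    rw [Real.log_inv, ← hterm]
    exact hs0
  rw [← ENNReal.ofReal_tsum_of_nonneg (fun k => by positivity) hs'.summable, hs'.tsum_eq]

lemma inner_sum (f : X → X) (t : ℝ) (ht0 : 0 ≤ t) (ht1 : t < 1) (x : X) :
    ∑' n : ℕ, Set.indicator {y : X | f^[n + 1] y = y}
        (fun _ => ENNReal.ofReal (t ^ (n + 1) / (n + 1))) x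
      = Set.indicator (periodicPts f)
          (fun y => ENNReal.ofReal
            (Real.log (1 - t ^ minimalPeriod f y)⁻¹ / minimalPeriod f y)) x := by
  by_cases hx : x ∈ periodicPts f
  · rw [Set.indicator_of_mem hx]
    have hd : 0 < minimalPeriod f x := minimalPeriod_pos_of_mem_periodicPts hx
    set d := minimalPeriod f x with hdd
    set w : ℕ → ENNReal := fun n => Set.indicator {y : X | f^[n + 1] y = y}
        (fun _ => ENNReal.ofReal (t ^ (n + 1) / (n + 1))) x with hw
    have hmem : ∀ n : ℕ, x ∈ {y : X | f^[n + 1] y = y} ↔ d ∣ (n + 1) := by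
      intro n
      exact Function.isPeriodicPt_iff_minimalPeriod_dvd
    set i : ℕ → ℕ := fun k => d * (k + 1) - 1 with hi
    have hi1 : ∀ k, i k + 1 = d * (k + 1) := by
      intro k
      have h1 : 1 ≤ d * (k + 1) := Nat.one_le_iff_ne_zero.2 (by positivity)
      show d * (k + 1) - 1 + 1 = d * (k + 1)
      omega
    have hinj : Function.Injective i := by
      intro a b h
      have ha := hi1 a; have hb := hi1 b
      have h2 : d * (a + 1) = d * (b + 1) := by
        have : i a = i b := h
        omega
      have := Nat.eq_of_mul_eq_mul_left hd h2
      omega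
    have hsupp : Function.support w ⊆ Set.range i := by
      intro n hn
      have hx' : x ∈ {y : X | f^[n + 1] y = y} := by
        by_contra hc
        exact hn (Set.indicator_of_notMem hc _)
      obtain ⟨m, hm⟩ := (hmem n).1 hx'
      have hm0 : m ≠ 0 := by
        rintro rfl
        rw [Nat.mul_zero] at hm
        omega
      refine ⟨m - 1, ?_⟩
      show d * (m - 1 + 1) - 1 = n
      have h1 : m - 1 + 1 = m := by omega
      rw [h1, ← hm]
      omega
    have hval : ∀ k : ℕ, w (i k)
        = ENNReal.ofReal (t ^ (d * (k + 1)) / ((d : ℝ) * ((k : ℝ) + 1))) := by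
      intro k
      have hx' : x ∈ {y : X | f^[i k + 1] y = y} :=
        (hmem _).2 ⟨k + 1, (hi1 k)⟩
      have h3 := hi1 k
      have h4 : ((i k : ℝ) + 1) = (d : ℝ) * ((k : ℝ) + 1) := by
        have h5 : ((i k + 1 : ℕ) : ℝ) = ((d * (k + 1) : ℕ) : ℝ) := by exact_mod_cast h3
        push_cast at h5
        linarith
      show Set.indicator {y : X | f^[i k + 1] y = y}
        (fun _ => ENNReal.ofReal (t ^ (i k + 1) / ((i k : ℝ) + 1))) x = _
      rw [Set.indicator_of_mem hx', h3, h4]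
    calc ∑' n, w n = ∑' k, w (i k) := (hinj.tsum_eq hsupp).symm
      _ = ∑' k, ENNReal.ofReal (t ^ (d * (k + 1)) / ((d : ℝ) * ((k : ℝ) + 1))) :=
          tsum_congr hval
      _ = _ := tsum_multiples t ht0 ht1 hd
  · rw [Set.indicator_of_notMem hx]
    have h0 : ∀ n : ℕ, Set.indicator {y : X | f^[n + 1] y = y}
        (fun _ => ENNReal.ofReal (t ^ (n + 1) / (n + 1))) x = 0 := by
      intro n
      apply Set.indicator_of_notMem
      intro hc
      exact hx (mk_mem_periodicPts (by omega) hc)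
    simp only [h0]
    exact tsum_zero


lemma key (f : X → X) (hfin : ∀ n : ℕ, 1 ≤ n → {x : X | f^[n] x = x}.Finite)
    (t : ℝ) (ht0 : 0 ≤ t) (ht1 : t < 1) :
    ∑' n : ℕ, ENNReal.ofReal (t ^ (n + 1) * (Nat.card {x : X | f^[n + 1] x = x}) / (n + 1))
      = ∑' o : Orb f, ENNReal.ofReal (Real.log (1 - t ^ Nat.card (o : Set X))⁻¹) := by
  classical
  have step1 : ∀ n : ℕ,
      ENNReal.ofReal (t ^ (n + 1) * (Nat.card {x : X | f^[n + 1] x = x}) / (n + 1))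
      = ∑' _x : {x : X | f^[n + 1] x = x}, ENNReal.ofReal (t ^ (n + 1) / (n + 1)) := by
    intro n
    haveI : Fintype {x : X | f^[n + 1] x = x} := (hfin (n + 1) (by omega)).fintype
    rw [tsum_fintype, Finset.sum_const, nsmul_eq_mul,
      ← ENNReal.ofReal_natCast (Finset.univ.card), ← ENNReal.ofReal_mul (by positivity)]
    congr 1
    rw [Finset.card_univ, ← Nat.card_eq_fintype_card]
    ring
  calc ∑' n : ℕ, ENNReal.ofReal (t ^ (n + 1) * (Nat.card {x : X | f^[n + 1] x = x}) / (n + 1))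
      = ∑' n : ℕ, ∑' _x : {x : X | f^[n + 1] x = x}, ENNReal.ofReal (t ^ (n + 1) / (n + 1)) :=
        tsum_congr step1
    _ = ∑' n : ℕ, ∑' x : X, Set.indicator {y : X | f^[n + 1] y = y}
          (fun _ => ENNReal.ofReal (t ^ (n + 1) / (n + 1))) x :=
        tsum_congr fun n => tsum_subtype {y : X | f^[n + 1] y = y}
          (fun _ => ENNReal.ofReal (t ^ (n + 1) / (n + 1)))
    _ = ∑' x : X, ∑' n : ℕ, Set.indicator {y : X | f^[n + 1] y = y}
          (fun _ => ENNReal.ofReal (t ^ (n + 1) / (n + 1))) x := ENNReal.tsum_comm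
    _ = ∑' x : X, Set.indicator (periodicPts f)
          (fun y => ENNReal.ofReal
            (Real.log (1 - t ^ minimalPeriod f y)⁻¹ / minimalPeriod f y)) x :=
        tsum_congr (inner_sum f t ht0 ht1)
    _ = ∑' x : Per f, ENNReal.ofReal
          (Real.log (1 - t ^ minimalPeriod f (x : X))⁻¹ / minimalPeriod f (x : X)) :=
        (tsum_subtype _ _).symm
    _ = ∑' x : Per f, ENNReal.ofReal
          (Real.log (1 - t ^ Nat.card ((pi f x : Set X)))⁻¹ / Nat.card ((pi f x : Set X))) :=
        tsum_congr fun x => by rw [card_pi]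
    _ = ∑' o : Orb f, ∑' _x : {x : Per f // pi f x = o}, ENNReal.ofReal
          (Real.log (1 - t ^ Nat.card ((o : Set X)))⁻¹ / Nat.card ((o : Set X))) := by
        rw [← (Equiv.sigmaFiberEquiv (pi f)).tsum_eq (fun x : Per f => ENNReal.ofReal
          (Real.log (1 - t ^ Nat.card ((pi f x : Set X)))⁻¹ / Nat.card ((pi f x : Set X)))),
          ENNReal.tsum_sigma']
        refine tsum_congr fun o => tsum_congr fun x => ?_
        simp only [Equiv.sigmaFiberEquiv, Equiv.coe_fn_mk]
        rw [x.2]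
    _ = ∑' o : Orb f, ENNReal.ofReal (Real.log (1 - t ^ Nat.card (o : Set X))⁻¹) := by
        refine tsum_congr fun o => ?_
        haveI : Fintype {x : Per f // pi f x = o} := Fintype.ofFinite _
        rw [tsum_fintype, Finset.sum_const, nsmul_eq_mul, Finset.card_univ,
          ← Nat.card_eq_fintype_card, card_fiber]
        have hm : 0 < Nat.card (o : Set X) := orb_card_pos o
        have hm' : ((Nat.card (o : Set X) : ℝ)) ≠ 0 := Nat.cast_ne_zero.mpr hm.ne'
        rw [← ENNReal.ofReal_natCast (Nat.card (o : Set X)),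
          ← ENNReal.ofReal_mul (by positivity)]
        congr 1
        rw [mul_comm, div_mul_cancel₀ _ hm']

end DynZetaAux

open DynZetaAux Function in
/-- Euler-product expansion of the dynamical zeta function:
`exp(Σ_{n≥1} tⁿ #Fix(fⁿ)/n) = ∏_o (1 - t^{|o|})⁻¹`, the product running over all
(finite) `f`-orbits of periodic points of `f`. -/
theorem dynamical_zeta_euler_product {X : Type*} (f : X → X)
    (hfin : ∀ n : ℕ, 1 ≤ n → {x : X | f^[n] x = x}.Finite)
    (t : ℝ) (ht0 : 0 ≤ t) (ht1 : t < 1)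
    (hsum : Summable (fun n : ℕ =>
      t ^ (n + 1) * (Nat.card {x : X | f^[n + 1] x = x}) / (n + 1))) :
    Multipliable (fun o : {o : Set X // ∃ x : X, (∃ m : ℕ, 1 ≤ m ∧ f^[m] x = x) ∧
        o = Set.range (fun k : ℕ => f^[k] x)} =>
        (1 - t ^ Nat.card (o : Set X))⁻¹) ∧
    Real.exp (∑' n : ℕ, t ^ (n + 1) * (Nat.card {x : X | f^[n + 1] x = x}) / (n + 1)) =
      ∏' o : {o : Set X // ∃ x : X, (∃ m : ℕ, 1 ≤ m ∧ f^[m] x = x) ∧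
        o = Set.range (fun k : ℕ => f^[k] x)},
        (1 - t ^ Nat.card (o : Set X))⁻¹ := by
  classical
  set L : Orb f → ℝ := fun o => Real.log (1 - t ^ Nat.card (o : Set X))⁻¹ with hL
  have hpos : ∀ o : Orb f, 0 < 1 - t ^ Nat.card (o : Set X) := by
    intro o
    have := pow_lt_one₀ ht0 ht1 (orb_card_pos o).ne'
    linarith
  have hL0 : ∀ o, 0 ≤ L o := by
    intro o
    rw [hL]
    simp only []
    rw [Real.log_inv]
    refine neg_nonneg.2 (Real.log_nonpos (by linarith [hpos o]) ?_)
    have : (0 : ℝ) ≤ t ^ Nat.card (o : Set X) := pow_nonneg ht0 _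
    linarith
  have hnn : ∀ n : ℕ,
      0 ≤ t ^ (n + 1) * (Nat.card {x : X | f^[n + 1] x = x}) / (n + 1) := by
    intro n
    positivity
  have hkey := key f hfin t ht0 ht1
  have h1 : ENNReal.ofReal
      (∑' n : ℕ, t ^ (n + 1) * (Nat.card {x : X | f^[n + 1] x = x}) / (n + 1))
      = ∑' o : Orb f, ENNReal.ofReal (L o) := by
    rw [ENNReal.ofReal_tsum_of_nonneg hnn hsum]
    exact hkey
  have hne : (∑' o : Orb f, ENNReal.ofReal (L o)) ≠ ⊤ := by
    rw [← h1]
    exact ENNReal.ofReal_ne_top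
  have hLs : Summable L := by
    refine (ENNReal.summable_toReal hne).congr fun o => ?_
    exact ENNReal.toReal_ofReal (hL0 o)
  have hS : (∑' n : ℕ, t ^ (n + 1) * (Nat.card {x : X | f^[n + 1] x = x}) / (n + 1))
      = ∑' o : Orb f, L o := by
    have h3 : ENNReal.ofReal (∑' o : Orb f, L o) = ∑' o : Orb f, ENNReal.ofReal (L o) :=
      ENNReal.ofReal_tsum_of_nonneg hL0 hLs
    exact (ENNReal.ofReal_eq_ofReal_iff (tsum_nonneg hnn) (tsum_nonneg hL0)).1
      (h1.trans h3.symm)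
  have hprod : HasProd (fun o : Orb f => (1 - t ^ Nat.card (o : Set X))⁻¹)
      (Real.exp (∑' o : Orb f, L o)) := by
    have hp := hLs.hasSum.rexp
    have hfun : (fun o : Orb f => (1 - t ^ Nat.card (o : Set X))⁻¹) = Real.exp ∘ L := by
      funext o
      simp only [Function.comp_apply, hL]
      rw [Real.exp_log (inv_pos.2 (hpos o))]
    rw [hfun]
    exact hp
  exact ⟨hprod.multipliable, by rw [hS]; exact hprod.tprod_eq.symm⟩
end

section
/- Let ι be an index set and ℓ : ι → ℝ a function with ℓ(i) > 0 for all i, such that for every real x the set {i ∈ ι | ℓ(i) ≤ x} is finite and ι is infinite. For x > 1 define π(x) = #{i ∈ ι | e^{ℓ(i)} ≤ x} and define the Chebysheff function ψ(x) = Σ ℓ(i), the (finite) sum over all pairs (i,k) with i ∈ ι, k ≥ 1 an integer, and e^{k·ℓ(i)} ≤ x. Then π(x) ∼ x/log x as x → ∞ (i.e. π(x)·log(x)/x → 1) if and only if ψ(x) ∼ x as x → ∞ (i.e. ψ(x)/x → 1). -/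
/-!
Write `θ(x) = ∑_{e^{ℓ i} ≤ x} ℓ i`. On one side `θ(x) ≤ π(x) log x`, and every `i` with
`x^c < e^{ℓ i} ≤ x` contributes at least `c log x`, so `c (π(x) - π(x^c)) log x ≤ θ(x)`.
On the other side `θ(x) ≤ ψ(x) ≤ θ(x) + π(√x) log x`, since the `i` counted with some
`k ≥ 2` have `e^{ℓ i} ≤ √x` and contribute `⌊log x / ℓ i⌋ ℓ i ≤ log x` in all.
Either asymptotic gives `θ(x) = O(x)`, hence `π(x) = O(x)` and `π(x^c) log x = o(x)` for
`c < 1`; letting `c → 1`, all three normalised functions tend to `1` together.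
-/

open Filter Asymptotics Real Topology Set

section

variable {α : Type*} {l : Filter α} {F G : α → ℝ}

theorem tendsto_one_iff_of_le_of_forall_mul_sub_le (hle : G ≤ᶠ[l] F)
    (hE : ∀ c ∈ Ioo (0 : ℝ) 1, ∃ E : α → ℝ, Tendsto E l (𝓝 0) ∧
      ∀ᶠ x in l, c * (F x - E x) ≤ G x) :
    Tendsto F l (𝓝 1) ↔ Tendsto G l (𝓝 1) := by
  constructor
  · intro hF
    refine tendsto_order.2 ⟨fun b hb => ?_, fun b hb => ?_⟩
    · obtain ⟨c, hbc, hc1⟩ := exists_between (max_lt hb zero_lt_one)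
      obtain ⟨E, hE0, hcE⟩ := hE c ⟨(le_max_right _ _).trans_lt hbc, hc1⟩
      have hlim : Tendsto (fun x => c * (F x - E x)) l (𝓝 c) := by
        simpa using (hF.sub hE0).const_mul c
      filter_upwards [hlim.eventually_const_lt ((le_max_left _ _).trans_lt hbc), hcE]
        with x hx hx' using hx.trans_le hx'
    · filter_upwards [hF.eventually_lt_const hb, hle] with x hx hx' using hx'.trans_lt hx
  · intro hG
    refine tendsto_order.2 ⟨fun b hb => ?_, fun b hb => ?_⟩
    · filter_upwards [hG.eventually_const_lt hb, hle] with x hx hx' using hx.trans_le hx'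
    · have hb0 : 0 < b := zero_lt_one.trans hb
      obtain ⟨c, hbc, hc1⟩ := exists_between (inv_lt_one_of_one_lt₀ hb)
      have hc0 : 0 < c := (inv_pos.2 hb0).trans hbc
      obtain ⟨E, hE0, hcE⟩ := hE c ⟨hc0, hc1⟩
      have hlim : Tendsto (fun x => G x + c * E x) l (𝓝 1) := by
        simpa using hG.add (hE0.const_mul c)
      have hcb : 1 < c * b := by rwa [inv_lt_iff_one_lt_mul₀ hb0] at hbc
      filter_upwards [hlim.eventually_lt_const hcb, hcE] with x hx hx'
      nlinarith

theorem tendsto_iff_of_tendsto_sub {H : α → ℝ} {a : ℝ} (h : Tendsto (H - G) l (𝓝 0)) :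
    Tendsto G l (𝓝 a) ↔ Tendsto H l (𝓝 a) :=
  ⟨fun hG => by simpa using hG.add h, fun hH => by simpa using hH.sub h⟩

end

theorem isLittleO_comp_rpow_mul_log {f : ℝ → ℝ} (hf : f =O[atTop] id) {c : ℝ} (hc0 : 0 < c)
    (hc1 : c < 1) : (fun x => f (x ^ c) * log x) =o[atTop] id := by
  have hpow : (fun x => f (x ^ c)) =O[atTop] fun x => x ^ c :=
    hf.comp_tendsto (tendsto_rpow_atTop hc0)
  refine (hpow.mul_isLittleO (isLittleO_log_rpow_atTop (sub_pos.2 hc1))).congr' .rfl ?_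
  filter_upwards [eventually_gt_atTop 0] with x hx
  rw [← rpow_add hx, add_sub_cancel, rpow_one, id]

theorem isBigO_id_of_le_of_tendsto_div {f g : ℝ → ℝ} {a : ℝ} (h0 : ∀ᶠ x in atTop, 0 ≤ f x)
    (hle : ∀ᶠ x in atTop, f x ≤ g x) (hg : Tendsto (fun x => g x / x) atTop (𝓝 a)) :
    f =O[atTop] id := by
  have hfg : f =O[atTop] g := IsBigO.of_bound 1 <| by
    filter_upwards [h0, hle] with x hx hx'
    rw [one_mul, norm_of_nonneg hx]
    exact hx'.trans (le_abs_self _)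
  refine hfg.trans ?_
  refine ((hg.isBigO_one ℝ).mul (isBigO_refl id atTop)).congr' ?_ (.of_forall fun _ => one_mul _)
  filter_upwards [eventually_ne_atTop 0] with x hx
  simp [div_mul_cancel₀ _ hx]

namespace LengthSpectrum

variable {ι : Type*} (ℓ : ι → ℝ)

noncomputable def count (x : ℝ) : ℕ := Nat.card {i : ι | exp (ℓ i) ≤ x}

noncomputable def theta (x : ℝ) : ℝ := ∑ᶠ i ∈ {i : ι | exp (ℓ i) ≤ x}, ℓ i

noncomputable def psi (x : ℝ) : ℝ :=
  ∑ᶠ p ∈ {p : ι × ℕ | 1 ≤ p.2 ∧ exp ((p.2 : ℝ) * ℓ p.1) ≤ x}, ℓ p.1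

variable {ℓ}

theorem theta_nonneg (hnn : ∀ i, 0 ≤ ℓ i) (x : ℝ) : 0 ≤ theta ℓ x :=
  finsum_nonneg fun i => finsum_nonneg fun _ => hnn i

variable (hfin : ∀ x : ℝ, {i : ι | ℓ i ≤ x}.Finite)
include hfin

theorem finite_setOf_exp_le (x : ℝ) : {i | exp (ℓ i) ≤ x}.Finite :=
  (hfin x).subset fun i (hi : exp (ℓ i) ≤ x) => show ℓ i ≤ x by linarith [add_one_le_exp (ℓ i)]

noncomputable def upTo (x : ℝ) : Finset ι := (finite_setOf_exp_le hfin x).toFinset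

theorem mem_upTo {x : ℝ} {i : ι} : i ∈ upTo hfin x ↔ exp (ℓ i) ≤ x :=
  Set.Finite.mem_toFinset _

theorem mem_upTo_iff_le_log {x : ℝ} (hx : 0 < x) {i : ι} : i ∈ upTo hfin x ↔ ℓ i ≤ log x := by
  rw [mem_upTo hfin, le_log_iff_exp_le hx]

theorem upTo_mono : Monotone (upTo hfin) := fun _ _ hyx _ hi =>
  (mem_upTo hfin).2 (((mem_upTo hfin).1 hi).trans hyx)

theorem count_eq_card (x : ℝ) : count ℓ x = (upTo hfin x).card := by
  rw [count, Nat.card_coe_set_eq, Set.ncard_eq_toFinset_card _ (finite_setOf_exp_le hfin x)]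
  rfl

theorem theta_eq_sum (x : ℝ) : theta ℓ x = ∑ i ∈ upTo hfin x, ℓ i :=
  finsum_mem_eq_finite_toFinset_sum _ _

theorem psi_eq_sum_floor (hpos : ∀ i, 0 < ℓ i) {x : ℝ} (hx : 1 ≤ x) :
    psi ℓ x = ∑ i ∈ upTo hfin x, ⌊log x / ℓ i⌋₊ * ℓ i := by
  have hx0 : 0 < x := zero_lt_one.trans_le hx
  set t : ι → Finset ℕ := fun i => Finset.Icc 1 ⌊log x / ℓ i⌋₊
  set r := ((upTo hfin x).sigma t).map (Equiv.sigmaEquivProd ι ℕ).toEmbedding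
  have hr : ∀ p, p ∈ r ↔ p.1 ∈ upTo hfin x ∧ p.2 ∈ t p.1 := by
    simp [r, Finset.mem_map_equiv]
  have hS : {p : ι × ℕ | 1 ≤ p.2 ∧ exp ((p.2 : ℝ) * ℓ p.1) ≤ x} = r := by
    ext ⟨i, k⟩
    simp only [Set.mem_ofPred_eq, Finset.mem_coe, hr, t, Finset.mem_Icc,
      mem_upTo_iff_le_log hfin hx0, ← le_log_iff_exp_le hx0,
      Nat.le_floor_iff (div_nonneg (log_nonneg hx) (hpos i).le), le_div_iff₀ (hpos i)]
    constructor
    · rintro ⟨hk, hkl⟩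
      exact ⟨(le_mul_of_one_le_left (hpos i).le (by exact_mod_cast hk)).trans hkl, hk, hkl⟩
    · rintro ⟨-, hk, hkl⟩
      exact ⟨hk, hkl⟩
  rw [psi, hS, finsum_mem_coe_finset, Finset.sum_finset_product r _ t hr]
  simp [t]

theorem theta_le_count_mul_log {x : ℝ} (hx : 0 < x) : theta ℓ x ≤ count ℓ x * log x := by
  rw [theta_eq_sum hfin, count_eq_card hfin, ← nsmul_eq_mul]
  exact Finset.sum_le_card_nsmul _ _ _ fun i hi => (mem_upTo_iff_le_log hfin hx).1 hi

theorem count_sub_mul_log_le_theta (hnn : ∀ i, 0 ≤ ℓ i) {x y : ℝ} (hy : 0 < y) (hyx : y ≤ x) :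
    ((count ℓ x : ℝ) - count ℓ y) * log y ≤ theta ℓ x := by
  classical
  have hsub := upTo_mono hfin hyx
  calc ((count ℓ x : ℝ) - count ℓ y) * log y = (upTo hfin x \ upTo hfin y).card • log y := by
        rw [count_eq_card hfin, count_eq_card hfin, Finset.card_sdiff_of_subset hsub,
          nsmul_eq_mul, Nat.cast_sub (Finset.card_le_card hsub)]
    _ ≤ ∑ i ∈ upTo hfin x \ upTo hfin y, ℓ i := by
        refine Finset.card_nsmul_le_sum _ _ _ fun i hi => ?_
        have := (Finset.mem_sdiff.1 hi).2
        rw [mem_upTo_iff_le_log hfin hy, not_le] at this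
        exact this.le
    _ ≤ theta ℓ x := theta_eq_sum hfin x ▸
        Finset.sum_le_sum_of_subset_of_nonneg Finset.sdiff_subset fun i _ _ => hnn i

theorem count_le_card_add_theta (hnn : ∀ i, 0 ≤ ℓ i) (x : ℝ) :
    (count ℓ x : ℝ) ≤ (hfin 1).toFinset.card + theta ℓ x := by
  classical
  have hterm : ∀ i, (1 : ℝ) ≤ (if i ∈ (hfin 1).toFinset then 1 else 0) + ℓ i := by
    intro i
    split_ifs with h
    · linarith [hnn i]
    · simp only [Set.Finite.mem_toFinset, Set.mem_ofPred_eq, not_le] at h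
      linarith
  calc (count ℓ x : ℝ) = ∑ i ∈ upTo hfin x, (1 : ℝ) := by simp [count_eq_card hfin]
    _ ≤ ∑ i ∈ upTo hfin x, ((if i ∈ (hfin 1).toFinset then 1 else 0) + ℓ i) :=
        Finset.sum_le_sum fun i _ => hterm i
    _ = (upTo hfin x ∩ (hfin 1).toFinset).card + theta ℓ x := by
        rw [Finset.sum_add_distrib, Finset.sum_ite_mem, theta_eq_sum hfin]
        simp
    _ ≤ (hfin 1).toFinset.card + theta ℓ x := by
        gcongr
        exact Finset.inter_subset_right

theorem theta_le_psi (hpos : ∀ i, 0 < ℓ i) {x : ℝ} (hx : 1 ≤ x) : theta ℓ x ≤ psi ℓ x := by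
  rw [theta_eq_sum hfin, psi_eq_sum_floor hfin hpos hx]
  refine Finset.sum_le_sum fun i hi => le_mul_of_one_le_left (hpos i).le ?_
  have hi := (mem_upTo_iff_le_log hfin (zero_lt_one.trans_le hx)).1 hi
  exact_mod_cast (Nat.one_le_floor_iff _).2 ((one_le_div (hpos i)).2 hi)

theorem psi_le_theta_add (hpos : ∀ i, 0 < ℓ i) {x : ℝ} (hx : 1 ≤ x) :
    psi ℓ x ≤ theta ℓ x + count ℓ √x * log x := by
  classical
  have hx0 : 0 < x := zero_lt_one.trans_le hx
  have hterm : ∀ i, ⌊log x / ℓ i⌋₊ * ℓ i ≤ ℓ i + if i ∈ upTo hfin √x then log x else 0 := by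
    intro i
    have hq : 0 ≤ log x / ℓ i := div_nonneg (log_nonneg hx) (hpos i).le
    split_ifs with h
    · calc (⌊log x / ℓ i⌋₊ : ℝ) * ℓ i ≤ log x / ℓ i * ℓ i :=
            mul_le_mul_of_nonneg_right (Nat.floor_le hq) (hpos i).le
        _ = log x := div_mul_cancel₀ _ (hpos i).ne'
        _ ≤ ℓ i + log x := le_add_of_nonneg_left (hpos i).le
    · rw [mem_upTo_iff_le_log hfin (sqrt_pos.2 hx0), log_sqrt hx0.le, not_le] at h
      have hfloor : ⌊log x / ℓ i⌋₊ ≤ 1 := Nat.lt_succ_iff.1 <| by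
        rw [Nat.floor_lt hq, div_lt_iff₀ (hpos i)]
        push_cast
        linarith
      calc (⌊log x / ℓ i⌋₊ : ℝ) * ℓ i ≤ 1 * ℓ i :=
            mul_le_mul_of_nonneg_right (by exact_mod_cast hfloor) (hpos i).le
        _ = ℓ i + 0 := by ring
  calc psi ℓ x ≤ ∑ i ∈ upTo hfin x, (ℓ i + if i ∈ upTo hfin √x then log x else 0) := by
        rw [psi_eq_sum_floor hfin hpos hx]
        exact Finset.sum_le_sum fun i _ => hterm i
    _ = theta ℓ x + count ℓ √x * log x := by
        rw [Finset.sum_add_distrib, Finset.sum_ite_mem, theta_eq_sum hfin, count_eq_card hfin,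
          Finset.inter_eq_right.2 (upTo_mono hfin (sqrt_le_self_iff.2 (Or.inr hx)))]
        simp

theorem isBigO_count (hnn : ∀ i, 0 ≤ ℓ i) (hθ : theta ℓ =O[atTop] id) :
    (fun x => (count ℓ x : ℝ)) =O[atTop] id := by
  have hle : (fun x => (count ℓ x : ℝ)) =O[atTop] fun x => (hfin 1).toFinset.card + theta ℓ x :=
    isBigO_of_le _ fun x => by
      rw [norm_of_nonneg (Nat.cast_nonneg _),
        norm_of_nonneg (add_nonneg (Nat.cast_nonneg _) (theta_nonneg hnn x))]
      exact count_le_card_add_theta hfin hnn x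
  exact hle.trans ((isLittleO_const_id_atTop _).isBigO.add hθ)

theorem tendsto_count_iff_tendsto_theta (hnn : ∀ i, 0 ≤ ℓ i) (hθ : theta ℓ =O[atTop] id) :
    Tendsto (fun x => (count ℓ x : ℝ) * log x / x) atTop (𝓝 1) ↔
      Tendsto (fun x => theta ℓ x / x) atTop (𝓝 1) := by
  refine tendsto_one_iff_of_le_of_forall_mul_sub_le ?_ fun c hc =>
    ⟨fun x => (count ℓ (x ^ c) : ℝ) * log x / x,
      (isLittleO_comp_rpow_mul_log (isBigO_count hfin hnn hθ) hc.1 hc.2).tendsto_div_nhds_zero, ?_⟩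
  · filter_upwards [eventually_gt_atTop 0] with x hx
    exact div_le_div_of_nonneg_right (theta_le_count_mul_log hfin hx) hx.le
  · filter_upwards [eventually_ge_atTop 1] with x hx
    have hx0 : 0 < x := zero_lt_one.trans_le hx
    have h := count_sub_mul_log_le_theta hfin hnn (rpow_pos_of_pos hx0 c)
      (rpow_le_self_of_one_le hx hc.2.le)
    rw [log_rpow hx0] at h
    rw [← sub_div, ← mul_div_assoc]
    exact div_le_div_of_nonneg_right (by linarith) hx0.le

theorem tendsto_theta_iff_tendsto_psi (hpos : ∀ i, 0 < ℓ i) (hθ : theta ℓ =O[atTop] id) :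
    Tendsto (fun x => theta ℓ x / x) atTop (𝓝 1) ↔
      Tendsto (fun x => psi ℓ x / x) atTop (𝓝 1) := by
  have hsqrt := (isLittleO_comp_rpow_mul_log (isBigO_count hfin (fun i => (hpos i).le) hθ)
    one_half_pos one_half_lt_one).tendsto_div_nhds_zero
  refine tendsto_iff_of_tendsto_sub (squeeze_zero' ?_ ?_ hsqrt)
  · filter_upwards [eventually_ge_atTop 1] with x hx
    rw [Pi.sub_apply, ← sub_div]
    exact div_nonneg (sub_nonneg.2 (theta_le_psi hfin hpos hx)) (zero_le_one.trans hx)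
  · filter_upwards [eventually_ge_atTop 1] with x hx
    rw [Pi.sub_apply, ← sub_div, ← sqrt_eq_rpow]
    exact div_le_div_of_nonneg_right (by linarith [psi_le_theta_add hfin hpos hx])
      (zero_le_one.trans hx)

theorem isBigO_theta_of_tendsto_count (hnn : ∀ i, 0 ≤ ℓ i)
    (h : Tendsto (fun x => (count ℓ x : ℝ) * log x / x) atTop (𝓝 1)) : theta ℓ =O[atTop] id :=
  isBigO_id_of_le_of_tendsto_div (.of_forall (theta_nonneg hnn))
    ((eventually_gt_atTop 0).mono fun _ hx => theta_le_count_mul_log hfin hx) h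

theorem isBigO_theta_of_tendsto_psi (hpos : ∀ i, 0 < ℓ i)
    (h : Tendsto (fun x => psi ℓ x / x) atTop (𝓝 1)) : theta ℓ =O[atTop] id :=
  isBigO_id_of_le_of_tendsto_div (.of_forall (theta_nonneg fun i => (hpos i).le))
    ((eventually_ge_atTop 1).mono fun _ hx => theta_le_psi hfin hpos hx) h

end LengthSpectrum

open LengthSpectrum

theorem prime_geodesic_theorem_iff_chebyshev_general {ι : Type*} (ℓ : ι → ℝ)
    (hpos : ∀ i, 0 < ℓ i) (hfin : ∀ x : ℝ, {i : ι | ℓ i ≤ x}.Finite) :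
    Tendsto (fun x : ℝ =>
        (Nat.card {i : ι | Real.exp (ℓ i) ≤ x} : ℝ) * Real.log x / x)
      atTop (nhds 1) ↔
    Tendsto (fun x : ℝ =>
        (∑ᶠ p ∈ {p : ι × ℕ | 1 ≤ p.2 ∧ Real.exp ((p.2 : ℝ) * ℓ p.1) ≤ x}, ℓ p.1) / x)
      atTop (nhds 1) := by
  have hnn : ∀ i, 0 ≤ ℓ i := fun i => (hpos i).le
  change Tendsto (fun x => (count ℓ x : ℝ) * log x / x) atTop (𝓝 1) ↔
    Tendsto (fun x => psi ℓ x / x) atTop (𝓝 1)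
  constructor
  · intro h
    have hθ := isBigO_theta_of_tendsto_count hfin hnn h
    exact (tendsto_theta_iff_tendsto_psi hfin hpos hθ).1
      ((tendsto_count_iff_tendsto_theta hfin hnn hθ).1 h)
  · intro h
    have hθ := isBigO_theta_of_tendsto_psi hfin hpos h
    exact (tendsto_count_iff_tendsto_theta hfin hnn hθ).2
      ((tendsto_theta_iff_tendsto_psi hfin hpos hθ).2 h)

/-- Equivalence of the prime geodesic theorem with its Chebysheff form: for lengths
`ℓ(i) > 0` with finitely many below any bound (and infinitely many in total), the
counting function `π(x) = #{i : e^{ℓ(i)} ≤ x}` satisfies `π(x) ~ x/log x` iff the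
Chebysheff function `ψ(x) = Σ_{(i,k) : k ≥ 1, e^{k ℓ(i)} ≤ x} ℓ(i)` satisfies
`ψ(x) ~ x`. -/
theorem prime_geodesic_theorem_iff_chebyshev {ι : Type*} [Infinite ι] (ℓ : ι → ℝ)
    (hpos : ∀ i, 0 < ℓ i) (hfin : ∀ x : ℝ, {i : ι | ℓ i ≤ x}.Finite) :
    Tendsto (fun x : ℝ =>
        (Nat.card {i : ι | Real.exp (ℓ i) ≤ x} : ℝ) * Real.log x / x)
      atTop (nhds 1) ↔
    Tendsto (fun x : ℝ =>
        (∑ᶠ p ∈ {p : ι × ℕ | 1 ≤ p.2 ∧ Real.exp ((p.2 : ℝ) * ℓ p.1) ≤ x}, ℓ p.1) / x)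
      atTop (nhds 1) :=
  prime_geodesic_theorem_iff_chebyshev_general ℓ hpos hfin
end

section
/- Let B be an invertible m×m complex matrix, φ : ℝ → ℂ a continuous function with compact support, and s : ℝ → ℂᵐ a continuous function satisfying the equivariance s(x + k) = B^k·s(x) for all x ∈ ℝ and k ∈ ℤ. Then for every x ∈ ℝ, ∫_ℝ φ(t)·s(x + t) dt = ∫_0^1 K(x,t)·s(t) dt, where K(x,t) = Σ_{k∈ℤ} φ(t − x + k)·B^k is a locally finite sum of matrices; consequently ∫_0^1 tr K(x,x) dx = Σ_{k∈ℤ} φ(k)·tr(B^k), a finite sum. -/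
/-!
Substituting `t ↦ t - x` and cutting `ℝ` into the unit intervals `[k, k + 1]`, the equivariance
`s (t + k) = B ^ k s t` turns `∫ φ (t - x) • s t` into `∑ k, ∫₀¹ φ (t - x + k) • B ^ k s t`. Since
`φ` has compact support only finitely many `k` contribute for `t ∈ [0, 1]`, so the sum can be
moved inside the integral, where it becomes the kernel. On the diagonal the kernel is
`∑ k, φ k • B ^ k`, independent of `x`.
-/

open MeasureTheory

/-- The smoothing kernel `K(x,t) = Σ_{k ∈ ℤ} φ(t - x + k)·B^k` of the suspension
flow; for each `(x,t)` only finitely many summands are nonzero since `φ` has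
compact support, so the finsum is a genuine finite sum. -/
noncomputable def suspensionKernel (m : ℕ) (B : (Matrix (Fin m) (Fin m) ℂ)ˣ)
    (φ : ℝ → ℂ) (x t : ℝ) : Matrix (Fin m) (Fin m) ℂ :=
  ∑ᶠ k : ℤ, φ (t - x + (k : ℝ)) • ((B ^ k : (Matrix (Fin m) (Fin m) ℂ)ˣ) : Matrix (Fin m) (Fin m) ℂ)

open Set Pointwise

lemma HasCompactSupport.exists_finset_forall_add_intCast_eq_zero {E : Type*} [Zero E]
    {φ : ℝ → E} (hφ : HasCompactSupport φ) {K : Set ℝ} (hK : IsCompact K) :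
    ∃ S : Finset ℤ, ∀ k ∉ S, ∀ t ∈ K, φ (t + k) = 0 := by
  have hfin : {k : ℤ | (k : ℝ) ∈ tsupport φ + -K}.Finite := by
    simpa using Filter.eventually_cofinite.mp <|
      Int.tendsto_coe_cofinite.eventually (IsCompact.add hφ hK.neg).compl_mem_cocompact
  refine ⟨hfin.toFinset, fun k hk t ht => image_eq_zero_of_notMem_tsupport fun hmem => ?_⟩
  exact hk <| hfin.mem_toFinset.mpr ⟨t + k, hmem, -t, by simpa using ht, by ring⟩

lemma MeasureTheory.Integrable.integral_eq_sum_intervalIntegral_comp_add_intCast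
    {E : Type*} [NormedAddCommGroup E] [NormedSpace ℝ E] {g : ℝ → E} (hg : Integrable g)
    {S : Finset ℤ} (hS : ∀ k ∉ S, ∀ t ∈ Icc (0 : ℝ) 1, g (t + k) = 0) :
    ∫ t, g t = ∑ k ∈ S, ∫ t in (0 : ℝ)..1, g (t + k) :=
  hg.hasSum_intervalIntegral_comp_add_int.unique <| hasSum_sum_of_ne_finset_zero fun k hk =>
    intervalIntegral.integral_zero_ae <| .of_forall fun t ht =>
      hS k hk t (Ioc_subset_Icc_self (by simpa using ht))

section SuspensionKernel

variable {m : ℕ} {B : (Matrix (Fin m) (Fin m) ℂ)ˣ} {φ : ℝ → ℂ}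

lemma suspensionKernel_eq_sum {x t : ℝ} {S : Finset ℤ} (hS : ∀ k ∉ S, φ (t - x + k) = 0) :
    suspensionKernel m B φ x t =
      ∑ k ∈ S, φ (t - x + k) •
        ((B ^ k : (Matrix (Fin m) (Fin m) ℂ)ˣ) : Matrix (Fin m) (Fin m) ℂ) := by
  refine finsum_eq_sum_of_support_subset _ fun k hk => ?_
  by_contra hkS
  simp [hS k hkS] at hk

lemma trace_suspensionKernel_self (hφ : HasCompactSupport φ) (x : ℝ) :
    (suspensionKernel m B φ x x).trace =
      ∑ᶠ k : ℤ, φ k * ((B ^ k : (Matrix (Fin m) (Fin m) ℂ)ˣ) : Matrix (Fin m) (Fin m) ℂ).trace := by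
  obtain ⟨S, hS⟩ := hφ.exists_finset_forall_add_intCast_eq_zero (K := {0}) isCompact_singleton
  have hS' : ∀ k ∉ S, φ k = 0 := fun k hk => by simpa using hS k hk 0 rfl
  rw [suspensionKernel_eq_sum (S := S) (by simpa using hS'), Matrix.trace_sum,
    finsum_eq_sum_of_support_subset (s := S) _ fun k hk => ?_]
  · simp [Matrix.trace_smul]
  · by_contra hkS
    simp [hS' k hkS] at hk

lemma intervalIntegral_suspensionKernel_mulVec (hφ : Continuous φ) (hsupp : HasCompactSupport φ)
    {s : ℝ → Fin m → ℂ} (hs : Continuous s)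
    (hequiv : ∀ (x : ℝ) (k : ℤ), s (x + k) =
      ((B ^ k : (Matrix (Fin m) (Fin m) ℂ)ˣ) : Matrix (Fin m) (Fin m) ℂ).mulVec (s x)) (x : ℝ) :
    ∫ t in (0 : ℝ)..1, (suspensionKernel m B φ x t).mulVec (s t) = ∫ t, φ t • s (x + t) := by
  obtain ⟨S, hS⟩ :=
    hsupp.exists_finset_forall_add_intCast_eq_zero (isCompact_Icc (a := -x) (b := 1 - x))
  have hvanish : ∀ k ∉ S, ∀ t ∈ Icc (0 : ℝ) 1, φ (t - x + k) = 0 := fun k hk t ht =>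
    hS k hk _ ⟨by linarith [ht.1], by linarith [ht.2]⟩
  set g : ℝ → Fin m → ℂ := fun t => φ (t - x) • s t
  have hg : Integrable g :=
    ((hφ.comp (continuous_sub_right x)).smul hs).integrable_of_hasCompactSupport
      (hsupp.comp_homeomorph (Homeomorph.subRight x)).smul_right
  have hshift (k : ℤ) (t : ℝ) : g (t + k) =
      φ (t - x + k) • ((B ^ k : (Matrix (Fin m) (Fin m) ℂ)ˣ) : Matrix (Fin m) (Fin m) ℂ).mulVec
        (s t) := by
    simp only [g, hequiv, add_sub_right_comm]
  calc ∫ t in (0 : ℝ)..1, (suspensionKernel m B φ x t).mulVec (s t)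
      = ∫ t in (0 : ℝ)..1, ∑ k ∈ S, g (t + k) := by
        refine intervalIntegral.integral_congr fun t ht => ?_
        rw [uIcc_of_le zero_le_one] at ht
        simp only [suspensionKernel_eq_sum fun k hk => hvanish k hk t ht, Matrix.sum_mulVec,
          Matrix.smul_mulVec, hshift]
    _ = ∑ k ∈ S, ∫ t in (0 : ℝ)..1, g (t + k) :=
        intervalIntegral.integral_finsetSum fun k _ => (hg.comp_add_right k).intervalIntegrable
    _ = ∫ t, g t := (hg.integral_eq_sum_intervalIntegral_comp_add_intCast fun k hk t ht => by
        rw [hshift, hvanish k hk t ht, zero_smul]).symm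
    _ = ∫ t, φ t • s (x + t) := by
        rw [← integral_add_right_eq_self g x]
        simp [g, add_comm]

end SuspensionKernel

/-- Kernel computation for the Lefschetz formula for suspensions: for an invertible
matrix `B`, a continuous compactly supported `φ` and a continuous equivariant section
`s` (i.e. `s(x+k) = B^k s(x)`), the smoothed flow operator
`(L_φ s)(x) = ∫_ℝ φ(t) s(x+t) dt` is the integral operator on `[0,1]` with kernel
`K(x,t) = Σ_k φ(t-x+k) B^k`, and `∫_0^1 tr K(x,x) dx = Σ_k φ(k) tr(B^k)`. -/
theorem suspension_kernel_formula (m : ℕ) (B : (Matrix (Fin m) (Fin m) ℂ)ˣ)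
    (φ : ℝ → ℂ) (hφ : Continuous φ) (hsupp : HasCompactSupport φ)
    (s : ℝ → Fin m → ℂ) (hs : Continuous s)
    (hequiv : ∀ (x : ℝ) (k : ℤ), s (x + (k : ℝ)) =
      ((B ^ k : (Matrix (Fin m) (Fin m) ℂ)ˣ) : Matrix (Fin m) (Fin m) ℂ).mulVec (s x)) :
    (∀ x : ℝ, (∫ t : ℝ, φ t • s (x + t)) =
        ∫ t in (0 : ℝ)..1, (suspensionKernel m B φ x t).mulVec (s t)) ∧
    (∫ x in (0 : ℝ)..1, (suspensionKernel m B φ x x).trace) =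
      ∑ᶠ k : ℤ, φ (k : ℝ) *
        ((B ^ k : (Matrix (Fin m) (Fin m) ℂ)ˣ) : Matrix (Fin m) (Fin m) ℂ).trace := by
  refine ⟨fun x => (intervalIntegral_suspensionKernel_mulVec hφ hsupp hs hequiv x).symm, ?_⟩
  simp only [trace_suspensionKernel_self hsupp, intervalIntegral.integral_const, sub_zero,
    one_smul]
end
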